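/- arXiv:1509.08859 — 3 statements merged into one kernel-verified Lean document; each statement's English description precedes it below -/
import Mathlib

section
/- (Fáry–Rédei; Rogers–Shephard; Ahn–Brass–Shin) Let K and K' be nonempty compact convex sets in EuclideanSpace ℝ (Fin d) and let t be a fixed vector. Then the function g : ℝ → ℝ defined by g(x) = vol(convexHull ℝ (K ∪ ((x • t) +ᵥ K'))) is convex on ℝ. -/
/-!
Slice space by the lines parallel to `t`. If `z = u x + v y` with `u + v = 1`, every point
`θ k + η (z t + k')` of the hull at time `z` is the same combination `u a + v b` of the points
`a = θ k + η (x t + k')` and `b = θ k + η (y t + k')` of the hulls at times `x` and `y`, and all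
three lie on one line parallel to `t`. Slices of convex sets are intervals, whose lengths are
their diameters, so on each line the slice at time `z` is at most `u` times as long as the slice
at time `x` plus `v` times the slice at time `y`; integrating over the lines gives the
inequality of volumes.
-/
open MeasureTheory Pointwise Set

theorem Set.OrdConnected.volume_eq_ediam {s : Set ℝ} (hs : s.OrdConnected) :
    volume s = Metric.ediam s := by
  refine le_antisymm (Real.volume_le_diam s) (Metric.ediam_le fun x hx y hy => ?_)
  calc edist x y = volume (uIcc x y) := by
        rw [Real.volume_interval, edist_dist, Real.dist_eq, abs_sub_comm]
    _ ≤ volume s := measure_mono (hs.uIcc_subset hx hy)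

theorem Real.volume_le_of_subset_smul_add_smul {s A B : Set ℝ} (hA : A.OrdConnected)
    (hB : B.OrdConnected) {u v : ℝ} (hu : 0 ≤ u) (hv : 0 ≤ v) (h : s ⊆ u • A + v • B) :
    volume s ≤ ENNReal.ofReal u * volume A + ENNReal.ofReal v * volume B := by
  calc volume s ≤ Metric.ediam (u • A + v • B) :=
        (Real.volume_le_diam s).trans (Metric.ediam_mono h)
    _ ≤ Metric.ediam (u • A) + Metric.ediam (v • B) := ediam_add_le _ _
    _ = ENNReal.ofReal u * volume A + ENNReal.ofReal v * volume B := by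
        rw [ediam_smul₀, ediam_smul₀, hA.volume_eq_ediam, hB.volume_eq_ediam,
          ← Real.enorm_of_nonneg hu, ← Real.enorm_of_nonneg hv]
        rfl

theorem Convex.ordConnected_preimage_prodMk {β : Type*} [AddCommGroup β] [Module ℝ β]
    {A : Set (ℝ × β)} (hA : Convex ℝ A) (y : β) : ((·, y) ⁻¹' A).OrdConnected := by
  refine Convex.ordConnected fun r hr s hs a b ha hb hab => ?_
  show (a • r + b • s, y) ∈ A
  convert hA hr hs ha hb hab using 1
  ext <;> simp [Convex.combo_self hab]

theorem MeasureTheory.Measure.volume_prod_le_of_slice_subset {β : Type*} [MeasurableSpace β]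
    (μ : Measure β) [SFinite μ] {A B C : Set (ℝ × β)} (hA : MeasurableSet A)
    (hB : MeasurableSet B) (hC : MeasurableSet C)
    (hAc : ∀ y, ((·, y) ⁻¹' A).OrdConnected) (hBc : ∀ y, ((·, y) ⁻¹' B).OrdConnected)
    {u v : ℝ} (hu : 0 ≤ u) (hv : 0 ≤ v)
    (h : ∀ y, (·, y) ⁻¹' C ⊆ u • ((·, y) ⁻¹' A) + v • ((·, y) ⁻¹' B)) :
    volume.prod μ C ≤
      ENNReal.ofReal u * volume.prod μ A + ENNReal.ofReal v * volume.prod μ B := by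
  rw [Measure.prod_apply_symm hA, Measure.prod_apply_symm hB, Measure.prod_apply_symm hC,
    ← lintegral_const_mul' _ _ ENNReal.ofReal_ne_top,
    ← lintegral_const_mul' _ _ ENNReal.ofReal_ne_top,
    ← lintegral_add_left ((measurable_measure_prodMk_right hA).const_mul _)]
  exact lintegral_mono fun y =>
    Real.volume_le_of_subset_smul_add_smul (hAc y) (hBc y) hu hv (h y)

section InnerProductSpace

variable {E : Type*} [NormedAddCommGroup E] [InnerProductSpace ℝ E] [FiniteDimensional ℝ E]
  [MeasurableSpace E] [BorelSpace E]

theorem exists_measurePreserving_linearEquiv_prod {t : E} (ht : t ≠ 0) :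
    ∃ (n : ℕ) (L : (ℝ × (Fin n → ℝ)) ≃ₗ[ℝ] E), MeasurePreserving L ∧ L (‖t‖, 0) = t := by
  obtain ⟨n, hn⟩ : ∃ n, Module.finrank ℝ E = n + 1 :=
    Nat.exists_eq_succ_of_ne_zero (Module.finrank_pos_iff_exists_ne_zero.2 ⟨t, ht⟩).ne'
  have hunit : Orthonormal ℝ (({0} : Set (Fin (n + 1))).domRestrict fun _ => ‖t‖⁻¹ • t) :=
    ⟨fun _ => norm_smul_inv_norm ht, fun i j hij =>
      absurd (Subtype.ext (i.2.trans j.2.symm)) hij⟩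
  obtain ⟨b, hb⟩ := hunit.exists_orthonormalBasis_extension_of_card_eq (by simp [hn])
  let L : (ℝ × (Fin n → ℝ)) ≃ₗ[ℝ] E := (Fin.consLinearEquiv ℝ fun _ => ℝ).trans
    ((WithLp.linearEquiv 2 ℝ (Fin (n + 1) → ℝ)).symm.trans b.repr.symm.toLinearEquiv)
  refine ⟨n, L, ?_, ?_⟩
  · convert (b.repr.symm.measurePreserving.comp (PiLp.volume_preserving_toLp _)).comp
      (volume_preserving_piFinSuccAbove (fun _ : Fin (n + 1) => ℝ) 0).symm using 1
    ext p : 1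
    simp only [MeasurableEquiv.piFinSuccAbove_symm_apply, Fin.insertNthEquiv_zero]
    rfl
  · calc L (‖t‖, 0) = b.repr.symm (‖t‖ • EuclideanSpace.single 0 1) := by
          refine congrArg b.repr.symm ?_
          ext i
          cases i using Fin.cases <;> simp
      _ = t := by
          rw [map_smul, b.repr_symm_single, hb 0 rfl, smul_inv_smul₀ (norm_ne_zero_iff.2 ht)]

theorem volume_le_of_forall_mem_eq_smul_add_smul_along {t : E} (ht : t ≠ 0) {A B C : Set E}
    (hA : MeasurableSet A) (hB : MeasurableSet B) (hC : MeasurableSet C) (hAc : Convex ℝ A)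
    (hBc : Convex ℝ B) {u v : ℝ} (hu : 0 ≤ u) (hv : 0 ≤ v)
    (h : ∀ p ∈ C, ∃ a ∈ A, ∃ b ∈ B, p = u • a + v • b ∧ a - p ∈ ℝ ∙ t ∧ b - p ∈ ℝ ∙ t) :
    volume C ≤ ENNReal.ofReal u * volume A + ENNReal.ofReal v * volume B := by
  obtain ⟨n, L, hL, hLt⟩ := exists_measurePreserving_linearEquiv_prod ht
  have hpre : ∀ S : Set E, MeasurableSet S → volume (L ⁻¹' S) = volume S :=
    fun S hS => hL.measure_preimage hS.nullMeasurableSet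
  rw [← hpre A hA, ← hpre B hB, ← hpre C hC, Measure.volume_eq_prod]
  refine Measure.volume_prod_le_of_slice_subset volume (hL.measurable hA) (hL.measurable hB)
    (hL.measurable hC) ((hAc.linear_preimage L.toLinearMap).ordConnected_preimage_prodMk)
    ((hBc.linear_preimage L.toLinearMap).ordConnected_preimage_prodMk) hu hv ?_
  intro y r (hr : L (r, y) ∈ C)
  obtain ⟨a, ha, b, hb, hab, hpa, hpb⟩ := h _ hr
  have hLt' : L.symm t = (‖t‖, 0) := L.symm_apply_eq.2 hLt.symm
  have hline : ∀ q, q - L (r, y) ∈ ℝ ∙ t → (L.symm q).2 = y := by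
    intro q hq
    obtain ⟨c, hc⟩ := Submodule.mem_span_singleton.1 hq
    have : L.symm q = (r, y) + c • (‖t‖, 0) := by
      rw [← hLt', ← map_smul, hc, map_sub, L.symm_apply_apply, add_sub_cancel]
    simp [this]
  have hr' : r = u * (L.symm a).1 + v * (L.symm b).1 := by
    simpa using congrArg (fun q => (L.symm q).1) hab
  rw [hr']
  exact add_mem_add
    (smul_mem_smul_set (show L (_, y) ∈ A by rwa [← hline a hpa, L.apply_symm_apply]))
    (smul_mem_smul_set (show L (_, y) ∈ B by rwa [← hline b hpb, L.apply_symm_apply]))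

end InnerProductSpace

theorem isCompact_convexJoin {E : Type*} [TopologicalSpace E] [AddCommGroup E] [Module ℝ E]
    [ContinuousAdd E] [ContinuousSMul ℝ E] {s t : Set E} (hs : IsCompact s) (ht : IsCompact t) :
    IsCompact (convexJoin ℝ s t) := by
  have : convexJoin ℝ s t =
      (fun p : (E × E) × ℝ => (1 - p.2) • p.1.1 + p.2 • p.1.2) '' ((s ×ˢ t) ×ˢ Icc 0 1) := by
    ext x
    simp only [mem_convexJoin, segment_eq_image, mem_image, mem_prod, Prod.exists]
    aesop
  rw [this]
  exact ((hs.prod ht).prod isCompact_Icc).image (by fun_prop)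

section ConvexHullUnion

variable {E : Type*} [AddCommGroup E] [Module ℝ E] {K K' : Set E}

theorem convexHull_union_eq_convexJoin (hK : Convex ℝ K) (hK' : Convex ℝ K')
    (hKne : K.Nonempty) (hK'ne : K'.Nonempty) : convexHull ℝ (K ∪ K') = convexJoin ℝ K K' := by
  rw [convexHull_union hKne hK'ne, hK.convexHull_eq, hK'.convexHull_eq]

theorem exists_mem_convexHull_union_vadd_of_mem (hK : Convex ℝ K) (hK' : Convex ℝ K')
    (hKne : K.Nonempty) (hK'ne : K'.Nonempty) (t : E) {x y u v : ℝ} (huv : u + v = 1) {p : E}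
    (hp : p ∈ convexHull ℝ (K ∪ ((u • x + v • y) • t +ᵥ K'))) :
    ∃ a ∈ convexHull ℝ (K ∪ (x • t +ᵥ K')), ∃ b ∈ convexHull ℝ (K ∪ (y • t +ᵥ K')),
      p = u • a + v • b ∧ a - p ∈ ℝ ∙ t ∧ b - p ∈ ℝ ∙ t := by
  rw [convexHull_union_eq_convexJoin hK (hK'.vadd _) hKne hK'ne.vadd_set] at hp
  obtain ⟨k, hk, -, ⟨k', hk', rfl⟩, θ, η, hθ, hη, hθη, rfl⟩ := mem_convexJoin.1 hp
  have hmem : ∀ z : ℝ, θ • k + η • (z • t +ᵥ k') ∈ convexHull ℝ (K ∪ (z • t +ᵥ K')) :=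
    fun z => segment_subset_convexHull (mem_union_left _ hk)
      (mem_union_right _ (vadd_mem_vadd_set hk')) ⟨θ, η, hθ, hη, hθη, rfl⟩
  refine ⟨_, hmem x, _, hmem y, ?_, Submodule.mem_span_singleton.2 ⟨η * (x - (u • x + v • y)), ?_⟩,
    Submodule.mem_span_singleton.2 ⟨η * (y - (u • x + v • y)), ?_⟩⟩
  · obtain rfl : v = 1 - u := by linarith
    simp only [vadd_eq_add, smul_eq_mul]
    module
  all_goals
    simp only [vadd_eq_add, smul_eq_mul]
    module

end ConvexHullUnion

/-- Fáry–Rédei; Rogers–Shephard; Ahn–Brass–Shin: if a convex body `K'` moves on a line with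
constant velocity `t`, the volume of the convex hull of its union with a fixed convex body
`K` is a convex function of the time. -/
theorem convexHull_volume_convex_of_translation (d : ℕ)
    (K K' : Set (EuclideanSpace ℝ (Fin d)))
    (hKc : IsCompact K) (hKconv : Convex ℝ K) (hKne : K.Nonempty)
    (hK'c : IsCompact K') (hK'conv : Convex ℝ K') (hK'ne : K'.Nonempty)
    (t : EuclideanSpace ℝ (Fin d)) :
    ConvexOn ℝ Set.univ
      (fun x : ℝ => (volume (convexHull ℝ (K ∪ ((x • t) +ᵥ K')))).toReal) := by
  rcases eq_or_ne t 0 with rfl | ht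
  · simp only [smul_zero]
    exact convexOn_const _ convex_univ
  set H : ℝ → Set (EuclideanSpace ℝ (Fin d)) := fun z => convexHull ℝ (K ∪ (z • t +ᵥ K'))
  have hH : ∀ z, IsCompact (H z) := fun z => by
    simpa only [H, convexHull_union_eq_convexJoin hKconv (hK'conv.vadd _) hKne hK'ne.vadd_set]
      using isCompact_convexJoin hKc (hK'c.vadd _)
  refine ⟨convex_univ, fun x _ y _ u v hu hv huv => ?_⟩
  have key : volume (H (u • x + v • y)) ≤
      ENNReal.ofReal u * volume (H x) + ENNReal.ofReal v * volume (H y) :=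
    volume_le_of_forall_mem_eq_smul_add_smul_along ht (hH x).isClosed.measurableSet
      (hH y).isClosed.measurableSet (hH _).isClosed.measurableSet (convex_convexHull ℝ _)
      (convex_convexHull ℝ _) hu hv
      fun p hp => exists_mem_convexHull_union_vadd_of_mem hKconv hK'conv hKne hK'ne t huv hp
  have hx : volume (H x) ≠ ⊤ := (hH x).measure_lt_top.ne
  have hy : volume (H y) ≠ ⊤ := (hH y).measure_lt_top.ne
  calc (volume (H (u • x + v • y))).toReal
      ≤ (ENNReal.ofReal u * volume (H x) + ENNReal.ofReal v * volume (H y)).toReal :=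
        ENNReal.toReal_mono (by finiteness) key
    _ = u • (volume (H x)).toReal + v • (volume (H y)).toReal := by
        rw [ENNReal.toReal_add (by finiteness) (by finiteness), ENNReal.toReal_mul,
          ENNReal.toReal_mul, ENNReal.toReal_ofReal hu, ENNReal.toReal_ofReal hv]
        rfl
end

section
/- Let K and K' be nonempty compact convex sets in EuclideanSpace ℝ (Fin d) and let u and v be fixed vectors. Then the function g : ℝ → ℝ defined by g(x) = vol(convexHull ℝ (((x • u) +ᵥ K) ∪ ((x • v) +ᵥ K'))) is convex on ℝ. (If two convex bodies move uniformly on two straight lines, the volume of their convex hull is a convex function of time.) -/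
open MeasureTheory Pointwise Set

/-!
Put `w = v - u`; translating by `-(x • u)` turns the hull at time `x` into
`C x = conv (K ∪ (x • w + K'))`. A point of `C x` is a convex combination of points of `K` and of
`x • w + K'`; if `θ` is the total weight on the latter, the same combination at time `x'` is that
point moved by `θ (x' - x) • w`. In coordinates where `w` is a basis vector, cut `C x` by the lines
parallel to `w`: each slice is a compact interval, and its upper end point has a supporting line
at every time (the motion of the point realising it), so it is convex in `x`; likewise the lower
end point is concave. Hence every slice length is convex in `x`, and so is the volume, by Fubini.
-/

theorem IsCompact.convexHull {E : Type*} [NormedAddCommGroup E] [NormedSpace ℝ E]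
    [FiniteDimensional ℝ E] {s : Set E} (hs : IsCompact s) : IsCompact (convexHull ℝ s) := by
  let comb : (k : ℕ) → (Fin k → E) × (Fin k → ℝ) → E := fun k p => ∑ i, p.2 i • p.1 i
  -- By Carathéodory, `finrank ℝ E + 1` points of `s` suffice for each point of the hull.
  suffices h : _root_.convexHull ℝ s = ⋃ k : Fin (Module.finrank ℝ E + 2),
      comb k '' ((univ.pi fun _ => s) ×ˢ stdSimplex ℝ (Fin k)) by
    rw [h]
    exact isCompact_iUnion fun k => ((isCompact_univ_pi fun _ => hs).prod
      (isCompact_stdSimplex ℝ _)).image (by fun_prop)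
  refine Subset.antisymm (fun x hx => ?_) (iUnion_subset fun k => ?_)
  · obtain ⟨ι, _, z, w, hzs, hind, hw0, hw1, rfl⟩ := eq_pos_convex_span_of_mem_convexHull hx
    have hcard : Fintype.card ι < Module.finrank ℝ E + 2 :=
      Nat.lt_succ_of_le (hind.card_le_finrank_succ.trans (by gcongr; exact Submodule.finrank_le _))
    let e := Fintype.equivFin ι
    refine mem_iUnion.2 ⟨⟨Fintype.card ι, hcard⟩, (z ∘ e.symm, w ∘ e.symm),
      ⟨fun i _ => hzs (mem_range_self _), fun i => (hw0 _).le, ?_⟩, ?_⟩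
    · rw [← hw1]
      exact e.symm.sum_comp w
    · exact e.symm.sum_comp fun i => w i • z i
  · rintro _ ⟨⟨z, w⟩, ⟨hz, hw0, hw1⟩, rfl⟩
    exact (convex_convexHull ℝ s).sum_mem (fun i _ => hw0 i) hw1
      fun i _ => subset_convexHull ℝ s (hz i trivial)

section Sliding

variable {E : Type*} [AddCommGroup E] [Module ℝ E]

def SlidesAlong (w : E) (C : ℝ → Set E) : Prop :=
  ∀ t, ∀ z ∈ C t, ∃ θ : ℝ, ∀ t', z + (θ * (t' - t)) • w ∈ C t'

theorem SlidesAlong.nonempty {w : E} {C : ℝ → Set E} (h : SlidesAlong w C) {t : ℝ}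
    (ht : (C t).Nonempty) (t' : ℝ) : (C t').Nonempty := by
  obtain ⟨z, hz⟩ := ht
  obtain ⟨θ, hθ⟩ := h t z hz
  exact ⟨_, hθ t'⟩

theorem convexHull_union_vadd_eq_image (A B : Set E) (c : E) :
    convexHull ℝ (A ∪ (c +ᵥ B)) = (LinearMap.fst ℝ E ℝ + (LinearMap.snd ℝ E ℝ).smulRight c) ''
      convexHull ℝ (A ×ˢ {0} ∪ B ×ˢ {1}) := by
  rw [LinearMap.image_convexHull, image_union]
  congr 2
  · ext; simp
  · ext; simp [mem_vadd_set, add_comm]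

theorem slidesAlong_convexHull_union_vadd (A B : Set E) (w : E) :
    SlidesAlong w fun t => convexHull ℝ (A ∪ ((t • w) +ᵥ B)) := by
  intro t z hz
  simp only [convexHull_union_vadd_eq_image] at hz ⊢
  obtain ⟨⟨x, θ⟩, hxθ, rfl⟩ := hz
  refine ⟨θ, fun t' => ⟨(x, θ), hxθ, ?_⟩⟩
  simp only [LinearMap.add_apply, LinearMap.fst_apply, LinearMap.smulRight_apply,
    LinearMap.snd_apply]
  module

end Sliding

theorem convexOn_of_forall_exists_add_mul_sub_le {s : Set ℝ} (hs : Convex ℝ s) {f : ℝ → ℝ}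
    (h : ∀ t ∈ s, ∃ θ, ∀ t' ∈ s, f t + θ * (t' - t) ≤ f t') : ConvexOn ℝ s f := by
  refine ⟨hs, fun t₀ ht₀ t₁ ht₁ a b ha hb hab => ?_⟩
  obtain ⟨θ, hθ⟩ := h _ (hs ht₀ ht₁ ha hb hab)
  have h₀ := hθ t₀ ht₀
  have h₁ := hθ t₁ ht₁
  simp only [smul_eq_mul] at h₀ h₁ ⊢
  linear_combination a * h₀ + b * h₁ + (θ * (a * t₀ + b * t₁) - f (a * t₀ + b * t₁)) * hab

theorem IsCompact.volume_toReal_eq_sSup_sub_sInf {s : Set ℝ} (hc : IsCompact s)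
    (hconv : Convex ℝ s) (hne : s.Nonempty) : (volume s).toReal = sSup s - sInf s := by
  nth_rw 1 [eq_Icc_of_connected_compact ⟨hne, hconv.isPreconnected⟩ hc]
  rw [Real.volume_Icc,
    ENNReal.toReal_ofReal (sub_nonneg.2 (csInf_le_csSup hne hc.bddBelow hc.bddAbove))]

section SlidingIntervals

variable {s : ℝ → Set ℝ} (h : SlidesAlong 1 s) (hc : ∀ t, IsCompact (s t))
include h hc

theorem SlidesAlong.convexOn_sSup (hne : ∀ t, (s t).Nonempty) :
    ConvexOn ℝ univ fun t => sSup (s t) :=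
  convexOn_of_forall_exists_add_mul_sub_le convex_univ fun t _ => by
    obtain ⟨θ, hθ⟩ := h t _ ((hc t).sSup_mem (hne t))
    refine ⟨θ, fun t' _ => ?_⟩
    simpa [mul_comm] using le_csSup (hc t').bddAbove (hθ t')

theorem SlidesAlong.concaveOn_sInf (hne : ∀ t, (s t).Nonempty) :
    ConcaveOn ℝ univ fun t => sInf (s t) := by
  rw [← neg_convexOn_iff]
  refine convexOn_of_forall_exists_add_mul_sub_le convex_univ fun t _ => ?_
  obtain ⟨θ, hθ⟩ := h t _ ((hc t).sInf_mem (hne t))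
  refine ⟨-θ, fun t' _ => ?_⟩
  have := csInf_le (hc t').bddBelow (hθ t')
  simp only [Pi.neg_apply, smul_eq_mul, mul_one] at this ⊢
  linarith

theorem SlidesAlong.convexOn_toReal_volume (hconv : ∀ t, Convex ℝ (s t)) :
    ConvexOn ℝ univ fun t => (volume (s t)).toReal := by
  by_cases hne : ∀ t, (s t).Nonempty
  · simp_rw [fun t => (hc t).volume_toReal_eq_sSup_sub_sInf (hconv t) (hne t)]
    exact (h.convexOn_sSup hc hne).sub (h.concaveOn_sInf hc hne)
  · obtain ⟨t₀, ht₀⟩ := not_forall.1 hne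
    have hempty (t : ℝ) : s t = ∅ :=
      not_nonempty_iff_eq_empty.1 fun ht => ht₀ (h.nonempty ht t₀)
    simpa [hempty] using convexOn_const (0 : ℝ) convex_univ

end SlidingIntervals

theorem convexOn_toReal_lintegral {E α : Type*} [AddCommGroup E] [Module ℝ E] [MeasurableSpace α]
    (μ : Measure α) {f : E → α → ENNReal} (hf : ∀ x, Measurable (f x))
    (hfin : ∀ x y, f x y ≠ ⊤) (hint : ∀ x, ∫⁻ y, f x y ∂μ ≠ ⊤)
    (hconv : ∀ y, ConvexOn ℝ univ fun x => (f x y).toReal) :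
    ConvexOn ℝ univ fun x => (∫⁻ y, f x y ∂μ).toReal := by
  refine ⟨convex_univ, fun x₀ _ x₁ _ a b ha hb hab => ?_⟩
  have hpoint (y : α) : f (a • x₀ + b • x₁) y ≤
      ENNReal.ofReal a * f x₀ y + ENNReal.ofReal b * f x₁ y := by
    rw [← ENNReal.ofReal_toReal (hfin _ y), ← ENNReal.ofReal_toReal (hfin x₀ y),
      ← ENNReal.ofReal_toReal (hfin x₁ y), ← ENNReal.ofReal_mul ha, ← ENNReal.ofReal_mul hb,
      ← ENNReal.ofReal_add (by positivity) (by positivity)]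
    exact ENNReal.ofReal_le_ofReal ((hconv y).2 trivial trivial ha hb hab)
  have hle : ∫⁻ y, f (a • x₀ + b • x₁) y ∂μ ≤
      ENNReal.ofReal a * ∫⁻ y, f x₀ y ∂μ + ENNReal.ofReal b * ∫⁻ y, f x₁ y ∂μ := by
    rw [← lintegral_const_mul _ (hf x₀), ← lintegral_const_mul _ (hf x₁),
      ← lintegral_add_left ((hf x₀).const_mul _)]
    exact lintegral_mono hpoint
  have hfin₀ : ENNReal.ofReal a * ∫⁻ y, f x₀ y ∂μ ≠ ⊤ := by finiteness [hint x₀]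
  have hfin₁ : ENNReal.ofReal b * ∫⁻ y, f x₁ y ∂μ ≠ ⊤ := by finiteness [hint x₁]
  have := ENNReal.toReal_mono (ENNReal.add_ne_top.2 ⟨hfin₀, hfin₁⟩) hle
  rwa [ENNReal.toReal_add hfin₀ hfin₁, ENNReal.toReal_mul, ENNReal.toReal_mul,
    ENNReal.toReal_ofReal ha, ENNReal.toReal_ofReal hb] at this

theorem SlidesAlong.convexOn_toReal_volume_prod {F : Type*} [AddCommGroup F] [Module ℝ F]
    [TopologicalSpace F] [T2Space F] [MeasurableSpace F] [OpensMeasurableSpace F]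
    (ν : Measure F) [SFinite ν] [IsFiniteMeasureOnCompacts ν] {C : ℝ → Set (ℝ × F)}
    (h : SlidesAlong ((1 : ℝ), (0 : F)) C) (hc : ∀ t, IsCompact (C t))
    (hconv : ∀ t, Convex ℝ (C t)) :
    ConvexOn ℝ univ fun t => ((volume.prod ν) (C t)).toReal := by
  let slice : ℝ → F → Set ℝ := fun t y => (fun r => (r, y)) ⁻¹' C t
  have hslice_compact (t : ℝ) (y : F) : IsCompact (slice t y) :=
    ((hc t).image continuous_fst).of_isClosed_subset
      ((hc t).isClosed.preimage (by fun_prop)) fun r hr => ⟨(r, y), hr, rfl⟩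
  have hslice_convex (t : ℝ) (y : F) : Convex ℝ (slice t y) := by
    intro r₁ h₁ r₂ h₂ a b ha hb hab
    simpa [slice, Convex.combo_self hab] using hconv t h₁ h₂ ha hb hab
  have hslice_slides (y : F) : SlidesAlong 1 fun t => slice t y := by
    intro t r hr
    obtain ⟨θ, hθ⟩ := h t _ hr
    exact ⟨θ, fun t' => by simpa [slice] using hθ t'⟩
  have hfubini (t : ℝ) : (volume.prod ν) (C t) = ∫⁻ y, volume (slice t y) ∂ν :=
    Measure.prod_apply_symm (hc t).measurableSet
  simp_rw [hfubini]
  refine convexOn_toReal_lintegral ν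
    (fun t => measurable_measure_prodMk_right (hc t).measurableSet)
    (fun t y => (hslice_compact t y).measure_ne_top) (fun t => hfubini t ▸ (hc t).measure_ne_top)
    fun y => (hslice_slides y).convexOn_toReal_volume (hslice_compact · y) (hslice_convex · y)

theorem SlidesAlong.convexOn_toReal_addHaar {E : Type*} [NormedAddCommGroup E] [NormedSpace ℝ E]
    [FiniteDimensional ℝ E] [MeasurableSpace E] [BorelSpace E] (μ : Measure E)
    [μ.IsAddHaarMeasure] {w : E} (hw : w ≠ 0) {C : ℝ → Set E} (h : SlidesAlong w C)
    (hc : ∀ t, IsCompact (C t)) (hconv : ∀ t, Convex ℝ (C t)) :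
    ConvexOn ℝ univ fun t => (μ (C t)).toReal := by
  obtain ⟨F, hF⟩ := Submodule.exists_isCompl (ℝ ∙ w)
  let Φ : (ℝ × F) ≃L[ℝ] E := (((LinearEquiv.toSpanNonzeroSingleton ℝ E w hw).prodCongr
    (LinearEquiv.refl ℝ F)).trans (Submodule.prodEquivOfIsCompl _ _ hF)).toContinuousLinearEquiv
  have hΦ (p : ℝ × F) : Φ p = p.1 • w + p.2 := rfl
  have hslides : SlidesAlong ((1 : ℝ), (0 : F)) fun t => Φ ⁻¹' C t := by
    intro t p hp
    obtain ⟨θ, hθ⟩ := h t _ hp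
    refine ⟨θ, fun t' => ?_⟩
    rw [mem_preimage, map_add, map_smul, hΦ (1, 0), one_smul, ZeroMemClass.coe_zero, add_zero]
    exact hθ t'
  have hμ (t : ℝ) : μ (C t) = (μ.map Φ.symm) (Φ ⁻¹' C t) := by
    rw [Measure.map_apply Φ.symm.continuous.measurable
      ((hc t).measurableSet.preimage Φ.continuous.measurable)]
    simp
  have := Φ.symm.isAddHaarMeasure_map μ
  obtain ⟨c, hc'⟩ : ∃ c : NNReal, μ.map Φ.symm = c • volume.prod Measure.addHaar :=
    ⟨_, Measure.isAddLeftInvariant_eq_smul _ _⟩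
  simp_rw [hμ, hc', Measure.smul_apply, ENNReal.toReal_smul]
  exact (hslides.convexOn_toReal_volume_prod Measure.addHaar
    (fun t => Φ.toHomeomorph.isCompact_preimage.2 (hc t))
    (fun t => (hconv t).linear_preimage Φ.toLinearMap)).smul c.coe_nonneg

theorem convexHull_volume_convex_of_two_translations_general (d : ℕ)
    (K K' : Set (EuclideanSpace ℝ (Fin d)))
    (hKc : IsCompact K)
    (hK'c : IsCompact K')
    (u v : EuclideanSpace ℝ (Fin d)) :
    ConvexOn ℝ Set.univ
      (fun x : ℝ => (volume (convexHull ℝ (((x • u) +ᵥ K) ∪ ((x • v) +ᵥ K')))).toReal) := by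
  have htranslate (x : ℝ) : ((x • u) +ᵥ K) ∪ ((x • v) +ᵥ K') =
      (x • u) +ᵥ (K ∪ ((x • (v - u)) +ᵥ K')) := by
    rw [vadd_set_union, vadd_vadd, smul_sub, add_sub_cancel]
  simp_rw [htranslate, convexHull_vadd, measure_vadd]
  rcases eq_or_ne (v - u) 0 with huv | huv
  · simpa [huv] using convexOn_const _ convex_univ
  · exact (slidesAlong_convexHull_union_vadd K K' (v - u)).convexOn_toReal_addHaar volume huv
      (fun x => (hKc.union (hK'c.vadd _)).convexHull) fun _ => convex_convexHull ℝ _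

/-- If two convex bodies move uniformly on two straight lines, then the volume of their
convex hull is a convex function of the time. -/
theorem convexHull_volume_convex_of_two_translations (d : ℕ)
    (K K' : Set (EuclideanSpace ℝ (Fin d)))
    (hKc : IsCompact K) (hKconv : Convex ℝ K) (hKne : K.Nonempty)
    (hK'c : IsCompact K') (hK'conv : Convex ℝ K') (hK'ne : K'.Nonempty)
    (u v : EuclideanSpace ℝ (Fin d)) :
    ConvexOn ℝ Set.univ
      (fun x : ℝ => (volume (convexHull ℝ (((x • u) +ᵥ K) ∪ ((x • v) +ᵥ K')))).toReal) :=
  convexHull_volume_convex_of_two_translations_general d K K' hKc hK'c u v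
end

section
/- (Rogers–Shephard, linear parameter systems) Let I be a nonempty index set, let a : I → EuclideanSpace ℝ (Fin d) and λ : I → ℝ be functions with bounded ranges, and let e be a fixed vector in EuclideanSpace ℝ (Fin d). For t ∈ ℝ let C(t) = convexHull ℝ {a(i) + (t·λ(i)) • e : i ∈ I}. Then the function t ↦ vol(C(t)) is convex on ℝ. -/
open MeasureTheory Set Bornology
open scoped NNReal ENNReal

/-!
Choose coordinates `E ≃ (ℝ ∙ e)ᗮ × ℝ` sending `e` to `(0, 1)` and lift the points to
`(yᵢ, sᵢ, λᵢ) ∈ (ℝ ∙ e)ᗮ × ℝ × ℝ`. Up to this change of coordinates, which scales volume by a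
constant, `C(t)` is the image of the fixed convex body `K = conv {(yᵢ, sᵢ, λᵢ)}` under
`(y, s, u) ↦ (y, s + t u)`. By Fubini its volume is the integral over `y` of the length of the
segment `{s + t u | (s, u) ∈ K_y}`, and that length is `sup_{K_y} (s + t u) + sup_{-K_y} (s + t u)`,
a sum of suprema of affine functions of `t`, hence convex in `t`.
-/

noncomputable def shear (t : ℝ) : ℝ × ℝ →L[ℝ] ℝ :=
  ContinuousLinearMap.fst ℝ ℝ ℝ + t • ContinuousLinearMap.snd ℝ ℝ ℝ

@[simp]
lemma shear_apply (t : ℝ) (q : ℝ × ℝ) : shear t q = q.1 + t * q.2 := rfl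

lemma Convex.volume_eq_ofReal_sSup_sub_sInf {s : Set ℝ} (hs : Convex ℝ s) (hc : IsCompact s)
    (hne : s.Nonempty) : volume s = ENNReal.ofReal (sSup s - sInf s) :=
  (congrArg volume (eq_Icc_of_connected_compact ⟨hne, hs.isPreconnected⟩ hc)).trans
    Real.volume_Icc

lemma convexOn_sSup_image_shear {A : Set (ℝ × ℝ)} (hA : IsBounded A) (hne : A.Nonempty) :
    ConvexOn ℝ univ fun t => sSup (shear t '' A) := by
  refine ⟨convex_univ, fun t₀ _ t₁ _ a b ha hb hab => csSup_le (hne.image _) ?_⟩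
  rintro _ ⟨q, hq, rfl⟩
  have hle : ∀ t, shear t q ≤ sSup (shear t '' A) := fun t =>
    le_csSup ((shear t).lipschitz.isBounded_image hA).bddAbove (mem_image_of_mem _ hq)
  calc shear (a • t₀ + b • t₁) q = a * shear t₀ q + b * shear t₁ q := by
        simp only [shear_apply, smul_eq_mul]; linear_combination (-q.1) * hab
    _ ≤ a • sSup (shear t₀ '' A) + b • sSup (shear t₁ '' A) := by
        simp only [smul_eq_mul]; gcongr <;> apply hle

lemma convexOn_volume_image_shear {A : Set (ℝ × ℝ)} (hA : IsCompact A) (hconv : Convex ℝ A) :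
    ConvexOn ℝ univ fun t => (volume (shear t '' A)).toReal := by
  rcases A.eq_empty_or_nonempty with rfl | hne
  · simpa using convexOn_const (0 : ℝ) convex_univ
  have hwidth : ∀ t, (volume (shear t '' A)).toReal =
      sSup (shear t '' A) + sSup (shear t '' (-A)) := by
    intro t
    have hc : IsCompact (shear t '' A) := hA.image (shear t).continuous
    have hcv : Convex ℝ (shear t '' A) := hconv.linear_image (shear t).toLinearMap
    rw [hcv.volume_eq_ofReal_sSup_sub_sInf hc (hne.image _),
      ENNReal.toReal_ofReal (sub_nonneg.2 (Real.sInf_le_sSup _ hc.bddBelow hc.bddAbove)),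
      Real.sInf_def, ← image_neg]
    ring
  simp only [hwidth]
  exact (convexOn_sSup_image_shear hA.isBounded hne).add
    (convexOn_sSup_image_shear hA.isBounded.neg hne.neg)

lemma convexOn_toReal_iff {f : ℝ → ℝ≥0∞} (hf : ∀ t, f t ≠ ⊤) :
    ConvexOn ℝ univ (fun t => (f t).toReal) ↔ ∀ t₀ t₁ a b : ℝ, 0 ≤ a → 0 ≤ b → a + b = 1 →
      f (a * t₀ + b * t₁) ≤ ENNReal.ofReal a * f t₀ + ENNReal.ofReal b * f t₁ := by
  have hfin : ∀ (a : ℝ) t, ENNReal.ofReal a * f t ≠ ⊤ := fun a t =>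
    ENNReal.mul_ne_top ENNReal.ofReal_ne_top (hf t)
  have hrhs : ∀ t₀ t₁ {a b : ℝ}, 0 ≤ a → 0 ≤ b →
      (ENNReal.ofReal a * f t₀ + ENNReal.ofReal b * f t₁).toReal =
        a * (f t₀).toReal + b * (f t₁).toReal := fun t₀ t₁ a b ha hb => by
    rw [ENNReal.toReal_add (hfin a t₀) (hfin b t₁), ENNReal.toReal_mul,
      ENNReal.toReal_mul, ENNReal.toReal_ofReal ha, ENNReal.toReal_ofReal hb]
  simp only [ConvexOn, convex_univ, mem_univ, true_and, forall_const, smul_eq_mul]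
  refine forall₄_congr fun t₀ t₁ a b => imp_congr_right fun ha => imp_congr_right fun hb =>
    imp_congr_right fun _ => ?_
  rw [← hrhs t₀ t₁ ha hb,
    ENNReal.toReal_le_toReal (hf _) (ENNReal.add_ne_top.2 ⟨hfin a t₀, hfin b t₁⟩)]

lemma IsCompact.preimage_prodMk {X Y : Type*} [TopologicalSpace X] [TopologicalSpace Y]
    [T2Space X] [T2Space Y] {K : Set (X × Y)} (hK : IsCompact K) (x : X) :
    IsCompact (Prod.mk x ⁻¹' K) :=
  (hK.image continuous_snd).of_isClosed_subset (hK.isClosed.preimage (Continuous.prodMk_right x))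
    fun _ hy => ⟨_, hy, rfl⟩

lemma Convex.preimage_prodMk {𝕜 E G : Type*} [Semiring 𝕜] [PartialOrder 𝕜] [AddCommMonoid E]
    [AddCommMonoid G] [Module 𝕜 E] [Module 𝕜 G] {K : Set (E × G)} (hK : Convex 𝕜 K) (x : E) :
    Convex 𝕜 (Prod.mk x ⁻¹' K) := fun _ h₁ _ h₂ a b ha hb hab => by
  simpa [Convex.combo_self hab] using hK h₁ h₂ ha hb hab

section Fubini

variable {F : Type*} [NormedAddCommGroup F] [NormedSpace ℝ F]

noncomputable def shearProd (t : ℝ) : F × ℝ × ℝ →L[ℝ] F × ℝ :=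
  (ContinuousLinearMap.id ℝ F).prodMap (shear t)

@[simp]
lemma shearProd_apply (t : ℝ) (p : F × ℝ × ℝ) : shearProd t p = (p.1, p.2.1 + t * p.2.2) := rfl

lemma preimage_prodMk_image_shearProd (t : ℝ) (K : Set (F × ℝ × ℝ)) (y : F) :
    Prod.mk y ⁻¹' (shearProd t '' K) = shear t '' (Prod.mk y ⁻¹' K) := by
  ext r
  simp [eq_comm]

lemma convexOn_measure_image_shearProd [MeasurableSpace F] [BorelSpace F]
    [SecondCountableTopology F] (μ : Measure F) [IsFiniteMeasureOnCompacts μ]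
    {K : Set (F × ℝ × ℝ)} (hK : IsCompact K) (hconv : Convex ℝ K) :
    ConvexOn ℝ univ fun t => ((μ.prod volume) (shearProd t '' K)).toReal := by
  have hmeas : ∀ t, MeasurableSet (shearProd t '' K) := fun t =>
    (hK.image (shearProd t).continuous).isClosed.measurableSet
  have hfiber : ∀ y : F, ∀ t₀ t₁ a b : ℝ, 0 ≤ a → 0 ≤ b → a + b = 1 →
      volume (shear (a * t₀ + b * t₁) '' (Prod.mk y ⁻¹' K)) ≤
        ENNReal.ofReal a * volume (shear t₀ '' (Prod.mk y ⁻¹' K)) +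
          ENNReal.ofReal b * volume (shear t₁ '' (Prod.mk y ⁻¹' K)) := fun y =>
    (convexOn_toReal_iff fun t =>
        ((hK.preimage_prodMk y).image (shear t).continuous).measure_lt_top.ne).1
      (convexOn_volume_image_shear (hK.preimage_prodMk y) (hconv.preimage_prodMk y))
  rw [convexOn_toReal_iff fun t => (hK.image (shearProd t).continuous).measure_lt_top.ne]
  intro t₀ t₁ a b ha hb hab
  have hm : ∀ t, Measurable fun y => volume (shear t '' (Prod.mk y ⁻¹' K)) := fun t => by
    simpa only [preimage_prodMk_image_shearProd] using measurable_measure_prodMk_left (hmeas t)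
  simp only [Measure.prod_apply (hmeas _), preimage_prodMk_image_shearProd]
  calc ∫⁻ y, volume (shear (a * t₀ + b * t₁) '' (Prod.mk y ⁻¹' K)) ∂μ
      ≤ ∫⁻ y, ENNReal.ofReal a * volume (shear t₀ '' (Prod.mk y ⁻¹' K)) +
          ENNReal.ofReal b * volume (shear t₁ '' (Prod.mk y ⁻¹' K)) ∂μ :=
        lintegral_mono fun y => hfiber y t₀ t₁ a b ha hb hab
    _ = _ := by
        rw [lintegral_add_left ((hm t₀).const_mul _), lintegral_const_mul _ (hm t₀),
          lintegral_const_mul _ (hm t₁)]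

lemma convexOn_measure_convexHull_image_shearProd [FiniteDimensional ℝ F] [MeasurableSpace F]
    [BorelSpace F] (μ : Measure F) [μ.IsAddHaarMeasure] {P : Set (F × ℝ × ℝ)}
    (hP : IsBounded P) :
    ConvexOn ℝ univ fun t => ((μ.prod volume) (convexHull ℝ (shearProd t '' P))).toReal := by
  have hK : IsCompact (closure (convexHull ℝ P)) := (isBounded_convexHull.2 hP).isCompact_closure
  have hvol : ∀ t, (μ.prod volume) (convexHull ℝ (shearProd t '' P)) =
      (μ.prod volume) (shearProd t '' closure (convexHull ℝ P)) := fun t => by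
    rw [image_closure_of_isCompact hK (shearProd t).continuous.continuousOn,
      IsLinearMap.image_convexHull (f := shearProd t) (shearProd t).toLinearMap.isLinear,
      measure_closure_of_null_frontier ((convex_convexHull ℝ _).addHaar_frontier _)]
  simpa only [hvol] using convexOn_measure_image_shearProd μ hK (convex_convexHull ℝ P).closure

lemma LinearEquiv.image_convexHull_shearProd {E : Type*} [AddCommGroup E] [Module ℝ E]
    (φ : (F × ℝ) ≃ₗ[ℝ] E) {I : Type*} (a : I → E) (lam : I → ℝ) (t : ℝ) :
    φ '' convexHull ℝ (shearProd t '' range fun i => ((φ.symm (a i)).1, (φ.symm (a i)).2, lam i)) =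
      convexHull ℝ (range fun i => a i + (t * lam i) • φ (0, 1)) := by
  rw [IsLinearMap.image_convexHull (f := φ) φ.toLinearMap.isLinear, ← Set.range_comp,
    ← Set.range_comp]
  congr 1
  refine congrArg range (funext fun i => ?_)
  have hshift : ((φ.symm (a i)).1, (φ.symm (a i)).2 + t * lam i) =
      φ.symm (a i) + (t * lam i) • ((0 : F), (1 : ℝ)) := by
    ext <;> simp
  rw [Function.comp_apply, Function.comp_apply, shearProd_apply, hshift, map_add, _root_.map_smul,
    apply_symm_apply]

end Fubini

lemma exists_orthogonal_prod_linearEquiv_apply_zero_one {E : Type*} [NormedAddCommGroup E]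
    [InnerProductSpace ℝ E] {e : E} (he : e ≠ 0) :
    ∃ φ : ((ℝ ∙ e)ᗮ × ℝ) ≃ₗ[ℝ] E, φ (0, 1) = e :=
  ⟨((LinearEquiv.refl ℝ _).prodCongr (LinearEquiv.toSpanNonzeroSingleton ℝ E e he)).trans
      (Submodule.prodEquivOfIsCompl _ _ (Submodule.isCompl_orthogonal _).symm),
    by simp⟩

lemma ContinuousLinearEquiv.exists_addHaar_image_eq_mul {G E : Type*} [NormedAddCommGroup G]
    [NormedSpace ℝ G] [FiniteDimensional ℝ G] [MeasurableSpace G] [BorelSpace G]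
    [NormedAddCommGroup E] [NormedSpace ℝ E] [FiniteDimensional ℝ E] [MeasurableSpace E]
    [BorelSpace E] (φ : G ≃L[ℝ] E) (μ : Measure E) (ν : Measure G) [μ.IsAddHaarMeasure]
    [ν.IsAddHaarMeasure] : ∃ κ : ℝ≥0, ∀ s, μ (φ '' s) = κ * ν s := by
  refine ⟨Measure.addHaarScalarFactor (μ.map φ.symm) ν, fun s => ?_⟩
  have hφ : MeasurableEmbedding φ.symm := φ.symm.toHomeomorph.measurableEmbedding
  rw [φ.image_eq_preimage_symm, ← hφ.map_apply]
  exact congrArg (· s) (Measure.isAddLeftInvariant_eq_smul (μ.map φ.symm) ν)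

theorem volume_linear_parameter_system_convex_general (d : ℕ) (I : Type*)
    (a : I → EuclideanSpace ℝ (Fin d)) (lam : I → ℝ)
    (ha : Bornology.IsBounded (Set.range a)) (hlam : Bornology.IsBounded (Set.range lam))
    (e : EuclideanSpace ℝ (Fin d)) :
    ConvexOn ℝ Set.univ
      (fun t : ℝ =>
        (volume (convexHull ℝ (Set.range fun i => a i + (t * lam i) • e))).toReal) := by
  rcases eq_or_ne e 0 with rfl | he
  · simpa using convexOn_const _ convex_univ
  obtain ⟨φ, hφe⟩ := exists_orthogonal_prod_linearEquiv_apply_zero_one he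
  obtain ⟨κ, hκ⟩ : ∃ κ : ℝ≥0, ∀ s, volume (φ '' s) = κ * volume s :=
    φ.toContinuousLinearEquiv.exists_addHaar_image_eq_mul volume (volume.prod volume)
  have hb : IsBounded (range fun i => φ.symm (a i)) := by
    rw [range_comp' φ.symm a]
    exact φ.toContinuousLinearEquiv.symm.lipschitz.isBounded_image ha
  have hP : IsBounded (range fun i => ((φ.symm (a i)).1, (φ.symm (a i)).2, lam i)) :=
    ((LipschitzWith.prod_fst.isBounded_image hb).prod
      ((LipschitzWith.prod_snd.isBounded_image hb).prod hlam)).subset <| by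
      rintro _ ⟨i, rfl⟩
      exact ⟨⟨_, ⟨i, rfl⟩, rfl⟩, ⟨_, ⟨i, rfl⟩, rfl⟩, ⟨i, rfl⟩⟩
  rw [← hφe]
  simp only [← φ.image_convexHull_shearProd, hκ, ENNReal.toReal_mul, ENNReal.coe_toReal]
  exact (convexOn_measure_convexHull_image_shearProd volume hP).smul κ.coe_nonneg

/-- Rogers–Shephard: the volume of the convex sets of a linear parameter system is a convex
function of the parameter. -/
theorem volume_linear_parameter_system_convex (d : ℕ) (I : Type*) [Nonempty I]
    (a : I → EuclideanSpace ℝ (Fin d)) (lam : I → ℝ)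
    (ha : Bornology.IsBounded (Set.range a)) (hlam : Bornology.IsBounded (Set.range lam))
    (e : EuclideanSpace ℝ (Fin d)) :
    ConvexOn ℝ Set.univ
      (fun t : ℝ =>
        (volume (convexHull ℝ (Set.range fun i => a i + (t * lam i) • e))).toReal) :=
  volume_linear_parameter_system_convex_general d I a lam ha hlam e
end
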